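/- (Theorem 8, second estimate) For all real numbers a and b, |P_a − P_b| ≤ (P_{a+b−1/2} · P_{a−b+1/2})^{1/2}, where P_a := K_a(p‖q) · K_a(q‖p) − 4H⁴. -/

import Mathlib

/-- The relative divergence of type `s`, `K_s(p‖q)`. -/
noncomputable def relDiv {ι : Type*} (p q : ι → ℝ) (s : ℝ) : ℝ :=
  if s = 0 then ∑' i, q i * Real.log (q i / p i)
  else if s = 1 then ∑' i, p i * Real.log (p i / q i)
  else ((∑' i, p i ^ s * q i ^ (1 - s)) - 1) / (s * (s - 1))

/-- The squared Hellinger distance `H²(p,q)`. -/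
noncomputable def hellingerSq {ι : Type*} (p q : ι → ℝ) : ℝ :=
  ∑' i, (Real.sqrt (p i) - Real.sqrt (q i)) ^ 2

/-- `P_a := K_a(p‖q) · K_a(q‖p) - 4H⁴`. -/
noncomputable def symP {ι : Type*} (p q : ι → ℝ) (a : ℝ) : ℝ :=
  relDiv p q a * relDiv q p a - 4 * (hellingerSq p q) ^ 2

/-!
After subtracting `s p_i + (1 - s) q_i` (which sums to `1`), the `i`-th summand of `K_s(p‖q)` is
`q_i` times the second divided difference of `s ↦ exp (s log (p_i / q_i))` at `0, 1, s`, so by the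
Hermite–Genocchi formula an integral of `exp ((s - 1/2) ω)` against a positive density. Summing
over `i`, `t ↦ K_{t+1/2}(p‖q)` is the moment generating function `M` of a finite measure `ν`. As
`K_s(q‖p) = K_{1-s}(p‖q)` and `K_{1/2}(p‖q) = 2H²`, we get `P_a = F (a - 1/2) - F 0` with
`F t = M t * M (-t) = ∫ cosh (t (ω - ω')) d(ν ⊗ ν)`. Since
`2 sinh u sinh v = cosh (u + v) - cosh (u - v)`, the estimate is the Cauchy–Schwarz inequality for
`sinh (X (ω - ω'))` and `sinh (Y (ω - ω'))` in `L²(ν ⊗ ν)`, where `X ± Y = a - 1/2, b - 1/2`.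
-/

open MeasureTheory ProbabilityTheory Real Set

section CoshTransform

variable {Ω : Type*} [MeasurableSpace Ω] {μ : Measure Ω} {Z : Ω → ℝ}

lemma sinh_mul_sinh (a b : ℝ) : sinh a * sinh b = (cosh (a + b) - cosh (a - b)) / 2 := by
  rw [cosh_add, cosh_sub]; ring

lemma integrable_sinh_mul_sinh (hZ : ∀ c, Integrable (fun ω => cosh (c * Z ω)) μ) (U V : ℝ) :
    Integrable (fun ω => sinh (U * Z ω) * sinh (V * Z ω)) μ := by
  simp_rw [sinh_mul_sinh, ← add_mul, ← sub_mul]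
  exact ((hZ _).sub (hZ _)).div_const 2

lemma integral_sinh_mul_sinh (hZ : ∀ c, Integrable (fun ω => cosh (c * Z ω)) μ) (U V : ℝ) :
    ∫ ω, sinh (U * Z ω) * sinh (V * Z ω) ∂μ =
      ((∫ ω, cosh ((U + V) * Z ω) ∂μ) - ∫ ω, cosh ((U - V) * Z ω) ∂μ) / 2 := by
  simp_rw [sinh_mul_sinh, ← add_mul, ← sub_mul]
  rw [integral_div, integral_sub (hZ _) (hZ _)]

theorem sq_sub_le_of_integral_cosh (hZ : ∀ c, Integrable (fun ω => cosh (c * Z ω)) μ)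
    {C : ℝ → ℝ} (hC : ∀ c, ∫ ω, cosh (c * Z ω) ∂μ = C c) (x y : ℝ) :
    (C x - C y) ^ 2 ≤ (C (x + y) - C 0) * (C (x - y) - C 0) := by
  set X := (x + y) / 2
  set Y := (x - y) / 2
  have hS : ∀ U V,
      ∫ ω, sinh (U * Z ω) * sinh (V * Z ω) ∂μ = (C (U + V) - C (U - V)) / 2 := fun U V => by
    rw [integral_sinh_mul_sinh hZ, hC, hC]
  have hquad : ∀ θ : ℝ, 0 ≤
      (C (x + y) - C 0) / 2 * (θ * θ) + -(2 * ((C x - C y) / 2)) * θ + (C (x - y) - C 0) / 2 := by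
    intro θ
    have I₁ := (integrable_sinh_mul_sinh hZ X X).const_mul (θ * θ)
    have I₂ := (integrable_sinh_mul_sinh hZ X Y).const_mul (2 * θ)
    have I₃ := integrable_sinh_mul_sinh hZ Y Y
    calc 0 ≤ ∫ ω, (θ * sinh (X * Z ω) - sinh (Y * Z ω)) ^ 2 ∂μ :=
          integral_nonneg fun _ => sq_nonneg _
      _ = ∫ ω, (θ * θ * (sinh (X * Z ω) * sinh (X * Z ω)) -
            2 * θ * (sinh (X * Z ω) * sinh (Y * Z ω)) +
            sinh (Y * Z ω) * sinh (Y * Z ω)) ∂μ := by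
          congr 1; funext ω; ring
      _ = _ := by
          rw [integral_add (I₁.sub I₂ : Integrable (fun ω => _ - _) μ) I₃, integral_sub I₁ I₂,
            integral_const_mul, integral_const_mul, hS, hS, hS, show X + X = x + y by ring,
            show Y + Y = x - y by ring, show X + Y = x by ring, show X - Y = y by ring,
            sub_self, sub_self]
          ring
  have hdiscr := discrim_le_zero hquad
  rw [discrim] at hdiscr
  nlinarith

end CoshTransform

section ProductMGF

variable {Ω : Type*} [MeasurableSpace Ω] {μ : Measure Ω} {X : Ω → ℝ}

lemma integrable_exp_mul_sub_prod (hX : ∀ t, Integrable (fun ω => exp (t * X ω)) μ) (c : ℝ) :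
    Integrable (fun z : Ω × Ω => exp (c * (X z.1 - X z.2))) (μ.prod μ) := by
  simp_rw [mul_sub, sub_eq_add_neg, exp_add, ← neg_mul]
  exact (hX c).mul_prod (hX (-c))

lemma integral_exp_mul_sub_prod [SFinite μ] (c : ℝ) :
    ∫ z : Ω × Ω, exp (c * (X z.1 - X z.2)) ∂(μ.prod μ) = mgf X μ c * mgf X μ (-c) := by
  simp_rw [mul_sub, sub_eq_add_neg, exp_add, ← neg_mul]
  exact integral_prod_mul (fun ω => exp (c * X ω)) (fun ω => exp (-c * X ω))

theorem sq_mgf_mul_mgf_neg_sub_le [SFinite μ] (hX : ∀ t, Integrable (fun ω => exp (t * X ω)) μ)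
    (x y : ℝ) :
    (mgf X μ x * mgf X μ (-x) - mgf X μ y * mgf X μ (-y)) ^ 2 ≤
      (mgf X μ (x + y) * mgf X μ (-(x + y)) - mgf X μ 0 * mgf X μ (-0)) *
      (mgf X μ (x - y) * mgf X μ (-(x - y)) - mgf X μ 0 * mgf X μ (-0)) := by
  refine sq_sub_le_of_integral_cosh (μ := μ.prod μ) (Z := fun z => X z.1 - X z.2)
    (C := fun c => mgf X μ c * mgf X μ (-c)) (fun c => ?_) (fun c => ?_) x y
  · simp_rw [cosh_eq, ← neg_mul]
    exact ((integrable_exp_mul_sub_prod hX c).add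
      (integrable_exp_mul_sub_prod hX (-c))).div_const 2
  · simp_rw [cosh_eq, ← neg_mul]
    rw [integral_div, integral_add (integrable_exp_mul_sub_prod hX c)
      (integrable_exp_mul_sub_prod hX (-c)), integral_exp_mul_sub_prod, integral_exp_mul_sub_prod,
      neg_neg]
    ring

end ProductMGF

section GenocchiMeasure

lemma mul_integral_exp_mul (c : ℝ) : c * ∫ u in (0 : ℝ)..1, exp (c * u) = exp c - 1 := by
  rw [intervalIntegral.mul_integral_comp_mul_left, integral_exp, mul_zero, mul_one, exp_zero]

/-- Integrating out `w₁` in the Hermite–Genocchi integral `l² ∫_{w₁ + w₂ ≤ 1} exp (l (w₁ + w₂ s))`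
of the divided difference of `s ↦ exp (l s)` at `0, 1, s` leaves
`∫₀¹ exp ((s - 1/2) l w₂) * genocchiDensity l w₂ dw₂`. -/
noncomputable def genocchiDensity (l u : ℝ) : ℝ :=
  l * (exp (l * (1 - u / 2)) - exp (l * (u / 2)))

lemma genocchiDensity_nonneg (l : ℝ) {u : ℝ} (hu : u ≤ 1) : 0 ≤ genocchiDensity l u := by
  have hle : u / 2 ≤ 1 - u / 2 := by linarith
  rcases le_total 0 l with hl | hl
  · exact mul_nonneg hl (sub_nonneg.2 (exp_le_exp.2 (mul_le_mul_of_nonneg_left hle hl)))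
  · exact mul_nonneg_of_nonpos_of_nonpos hl
      (sub_nonpos.2 (exp_le_exp.2 (mul_le_mul_of_nonpos_left hle hl)))

noncomputable def genocchiMeasure (l : ℝ) : Measure ℝ :=
  ((volume.restrict (Ioc (0 : ℝ) 1)).withDensity
    fun u => ENNReal.ofReal (genocchiDensity l u)).map (l * ·)

instance (l : ℝ) : SFinite (genocchiMeasure l) := by
  unfold genocchiMeasure; infer_instance

lemma integrable_exp_mul_genocchiMeasure (l t : ℝ) :
    Integrable (fun ω => exp (t * ω)) (genocchiMeasure l) := by
  rw [genocchiMeasure, integrable_map_measure (by fun_prop) (by fun_prop),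
    integrable_withDensity_iff_integrable_smul' (by unfold genocchiDensity; fun_prop)
      (ae_of_all _ fun _ => ENNReal.ofReal_lt_top)]
  simp_rw [ENNReal.toReal_ofReal']
  exact Continuous.integrableOn_Ioc (by unfold genocchiDensity; fun_prop)

lemma mgf_genocchiMeasure (l t : ℝ) :
    mgf id (genocchiMeasure l) t =
      ∫ u in (0 : ℝ)..1, exp (t * (l * u)) * genocchiDensity l u := by
  rw [genocchiMeasure, mgf_id_map (by fun_prop), mgf,
    integral_withDensity_eq_integral_toReal_smul (by unfold genocchiDensity; fun_prop)
      (ae_of_all _ fun _ => ENNReal.ofReal_lt_top), intervalIntegral.integral_of_le zero_le_one]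
  refine setIntegral_congr_fun measurableSet_Ioc fun u hu => ?_
  rw [smul_eq_mul, ENNReal.toReal_ofReal (genocchiDensity_nonneg l hu.2), mul_comm]

lemma mgf_genocchiMeasure_eq (l s : ℝ) :
    mgf id (genocchiMeasure l) (s - 1 / 2) =
      l * (exp l * ∫ u in (0 : ℝ)..1, exp (l * (s - 1) * u)) -
        l * ∫ u in (0 : ℝ)..1, exp (l * s * u) := by
  have hpt : ∀ u, exp ((s - 1 / 2) * (l * u)) * genocchiDensity l u =
      l * (exp l * exp (l * (s - 1) * u)) - l * exp (l * s * u) := fun u => by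
    rw [genocchiDensity, ← exp_add, mul_left_comm, mul_sub, ← exp_add, ← exp_add,
      show (s - 1 / 2) * (l * u) + l * (1 - u / 2) = l + l * (s - 1) * u by ring,
      show (s - 1 / 2) * (l * u) + l * (u / 2) = l * s * u by ring, mul_sub]
  simp_rw [mgf_genocchiMeasure, hpt]
  rw [intervalIntegral.integral_sub (Continuous.intervalIntegrable (by fun_prop) _ _)
    (Continuous.intervalIntegrable (by fun_prop) _ _), intervalIntegral.integral_const_mul,
    intervalIntegral.integral_const_mul, intervalIntegral.integral_const_mul]

lemma mul_mgf_genocchiMeasure (l s : ℝ) :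
    s * (s - 1) * mgf id (genocchiMeasure l) (s - 1 / 2) =
      exp (l * s) - s * exp l - (1 - s) := by
  have h₁ := mul_integral_exp_mul (l * (s - 1))
  have h₂ := mul_integral_exp_mul (l * s)
  have hexp : exp l * exp (l * (s - 1)) = exp (l * s) := by rw [← exp_add]; ring_nf
  rw [mgf_genocchiMeasure_eq]
  linear_combination s * exp l * h₁ - (s - 1) * h₂ + s * hexp

lemma mgf_genocchiMeasure_half (l : ℝ) :
    mgf id (genocchiMeasure l) (1 / 2) = l * exp l - exp l + 1 := by
  have h := mgf_genocchiMeasure_eq l 1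
  simp only [sub_self, mul_zero, zero_mul, exp_zero, intervalIntegral.integral_const, sub_zero,
    smul_eq_mul, mul_one] at h
  rw [show (1 : ℝ) - 1 / 2 = 1 / 2 by norm_num] at h
  linear_combination h - mul_integral_exp_mul l

lemma mgf_genocchiMeasure_neg_half (l : ℝ) :
    mgf id (genocchiMeasure l) (-(1 / 2)) = exp l - 1 - l := by
  have h := mgf_genocchiMeasure_eq l 0
  have hexp : exp l * exp (-l) = 1 := by rw [← exp_add, add_neg_cancel, exp_zero]
  simp only [mul_zero, zero_mul, exp_zero, intervalIntegral.integral_const, sub_zero,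
    smul_eq_mul, mul_one, zero_sub, mul_neg] at h
  linear_combination h - exp l * mul_integral_exp_mul (-l) - hexp

end GenocchiMeasure

lemma hasSum_of_tsum_eq {ι α : Type*} [AddCommMonoid α] [TopologicalSpace α] {f : ι → α} {a : α}
    (ha : a ≠ 0) (h : ∑' i, f i = a) :
    HasSum f a := by
  have hf : Summable f := by
    by_contra hf
    rw [tsum_eq_zero_of_not_summable hf] at h
    exact ha h.symm
  exact h ▸ hf.hasSum

lemma rpow_mul_rpow_one_sub_eq_mul_exp {x y : ℝ} (hx : 0 < x) (hy : 0 < y) (s : ℝ) :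
    x ^ s * y ^ (1 - s) = y * exp (log (x / y) * s) :=
  calc x ^ s * y ^ (1 - s) = exp (log y + log (x / y) * s) := by
        rw [rpow_def_of_pos hx, rpow_def_of_pos hy, log_div hx.ne' hy.ne', ← exp_add]; ring_nf
    _ = y * exp (log (x / y) * s) := by rw [exp_add, exp_log hy]

section LogRatio

variable {x y : ℝ} (hx : 0 < x) (hy : 0 < y)
include hx hy

lemma exists_eq_mul_exp_log_div : ∃ l, x = y * exp l ∧ log (x / y) = l :=
  ⟨log (x / y), by rw [exp_log (div_pos hx hy), mul_div_cancel₀ _ hy.ne'], rfl⟩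

lemma mul_mgf_genocchiMeasure_log_div {s : ℝ} (hs0 : s ≠ 0) (hs1 : s ≠ 1) :
    y * mgf id (genocchiMeasure (log (x / y))) (s - 1 / 2) =
      (x ^ s * y ^ (1 - s) - s * x - (1 - s) * y) / (s * (s - 1)) := by
  rw [rpow_mul_rpow_one_sub_eq_mul_exp hx hy]
  obtain ⟨l, rfl, hl⟩ := exists_eq_mul_exp_log_div hx hy
  rw [hl, eq_div_iff (mul_ne_zero hs0 (sub_ne_zero.2 hs1))]
  linear_combination y * mul_mgf_genocchiMeasure l s

lemma mul_mgf_genocchiMeasure_log_div_half :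
    y * mgf id (genocchiMeasure (log (x / y))) (1 / 2) = x * log (x / y) - x + y := by
  obtain ⟨l, rfl, hl⟩ := exists_eq_mul_exp_log_div hx hy
  rw [hl, mgf_genocchiMeasure_half]
  ring

lemma mul_mgf_genocchiMeasure_log_div_neg_half :
    y * mgf id (genocchiMeasure (log (x / y))) (-(1 / 2)) = y * log (y / x) + (x - y) := by
  rw [← inv_div x y, log_inv]
  obtain ⟨l, rfl, hl⟩ := exists_eq_mul_exp_log_div hx hy
  rw [hl, mgf_genocchiMeasure_neg_half]
  ring

end LogRatio

section Divergences

variable {ι : Type*}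

lemma relDiv_comm (p q : ι → ℝ) (s : ℝ) : relDiv q p s = relDiv p q (1 - s) := by
  by_cases hs0 : s = 0
  · simp [relDiv, hs0]
  by_cases hs1 : s = 1
  · simp [relDiv, hs1]
  have hs0' : 1 - s ≠ 0 := sub_ne_zero.2 (Ne.symm hs1)
  have hs1' : 1 - s ≠ 1 := by simpa using hs0
  simp only [relDiv, hs0, hs1, hs0', hs1', if_false, sub_sub_cancel]
  rw [tsum_congr fun i => mul_comm (q i ^ s) _]
  congr 1
  ring

variable {p q : ι → ℝ}

lemma relDiv_half (hp : ∀ i, 0 < p i) (hq : ∀ i, 0 < q i) (hp1 : ∑' i, p i = 1)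
    (hq1 : ∑' i, q i = 1) (hmom : Summable fun i => p i ^ (1 / 2 : ℝ) * q i ^ (1 - 1 / 2 : ℝ)) :
    relDiv p q (1 / 2) = 2 * hellingerSq p q := by
  have hsqrt : ∀ i, p i ^ (1 / 2 : ℝ) * q i ^ (1 - 1 / 2 : ℝ) = sqrt (p i) * sqrt (q i) :=
    fun i => by rw [sqrt_eq_rpow, sqrt_eq_rpow]; norm_num
  have hsq : ∀ i, (sqrt (p i) - sqrt (q i)) ^ 2 = p i + q i - 2 * (sqrt (p i) * sqrt (q i)) :=
    fun i => by rw [sub_sq, sq_sqrt (hp i).le, sq_sqrt (hq i).le]; ring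
  have hH : HasSum (fun i => (sqrt (p i) - sqrt (q i)) ^ 2)
      (1 + 1 - 2 * ∑' i, p i ^ (1 / 2 : ℝ) * q i ^ (1 - 1 / 2 : ℝ)) := by
    simp_rw [hsq, ← hsqrt]
    exact ((hasSum_of_tsum_eq one_ne_zero hp1).add (hasSum_of_tsum_eq one_ne_zero hq1)).sub
      (hmom.hasSum.mul_left 2)
  rw [hellingerSq, hH.tsum_eq]
  simp only [relDiv, show (1 / 2 : ℝ) ≠ 0 by norm_num, show (1 / 2 : ℝ) ≠ 1 by norm_num, if_false]
  ring

noncomputable def relDivMeasure (p q : ι → ℝ) : Measure ℝ :=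
  Measure.sum fun i => ENNReal.ofReal (q i) • genocchiMeasure (log (p i / q i))

instance [Countable ι] : SFinite (relDivMeasure p q) := by
  unfold relDivMeasure; infer_instance

section Representation

variable (hp : ∀ i, 0 < p i) (hq : ∀ i, 0 < q i) (hp1 : ∑' i, p i = 1)
  (hq1 : ∑' i, q i = 1) (hmom : ∀ s : ℝ, Summable (fun i => p i ^ s * q i ^ (1 - s)))
  (hpq : Summable (fun i => p i * log (p i / q i)))
  (hqp : Summable (fun i => q i * log (q i / p i)))
include hp hq hp1 hq1 hmom hpq hqp

lemma hasSum_relDiv (s : ℝ) :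
    HasSum (fun i => q i * mgf id (genocchiMeasure (log (p i / q i))) (s - 1 / 2))
      (relDiv p q s) := by
  have hP := hasSum_of_tsum_eq one_ne_zero hp1
  have hQ := hasSum_of_tsum_eq one_ne_zero hq1
  by_cases hs0 : s = 0
  · subst hs0
    have h := hqp.hasSum.add (hP.sub hQ)
    rw [sub_self, add_zero] at h
    simp only [zero_sub, mul_mgf_genocchiMeasure_log_div_neg_half (hp _) (hq _)]
    simpa only [relDiv, if_true] using h
  by_cases hs1 : s = 1
  · subst hs1
    have h := (hpq.hasSum.sub hP).add hQ
    rw [sub_add_cancel] at h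
    simp only [show (1 : ℝ) - 1 / 2 = 1 / 2 by norm_num,
      mul_mgf_genocchiMeasure_log_div_half (hp _) (hq _)]
    simpa only [relDiv, one_ne_zero, if_true, if_false] using h
  have h := (((hmom s).hasSum.sub (hP.mul_left s)).sub (hQ.mul_left (1 - s))).div_const
    (s * (s - 1))
  rw [mul_one, mul_one, sub_sub, add_sub_cancel] at h
  simp only [mul_mgf_genocchiMeasure_log_div (hp _) (hq _) hs0 hs1]
  simpa only [relDiv, hs0, hs1, if_false] using h

lemma hasSum_mgf_smul_genocchiMeasure (t : ℝ) :
    HasSum (fun i => mgf id (ENNReal.ofReal (q i) • genocchiMeasure (log (p i / q i))) t)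
      (relDiv p q (t + 1 / 2)) := by
  have h := hasSum_relDiv hp hq hp1 hq1 hmom hpq hqp (t + 1 / 2)
  simpa only [add_sub_cancel_right, mgf_smul_measure, ENNReal.toReal_ofReal (hq _).le] using h

lemma integrable_exp_mul_relDivMeasure [Countable ι] (t : ℝ) :
    Integrable (fun ω => exp (t * ω)) (relDivMeasure p q) := by
  refine integrable_sum_measure
    (fun i => (integrable_exp_mul_genocchiMeasure _ t).smul_measure ENNReal.ofReal_ne_top) ?_
  simp_rw [norm_of_nonneg (exp_pos _).le]
  exact (hasSum_mgf_smul_genocchiMeasure hp hq hp1 hq1 hmom hpq hqp t).summable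

lemma mgf_relDivMeasure [Countable ι] (t : ℝ) :
    mgf id (relDivMeasure p q) t = relDiv p q (t + 1 / 2) := by
  rw [relDivMeasure, mgf_sum_measure (X := id)
    (integrable_exp_mul_relDivMeasure hp hq hp1 hq1 hmom hpq hqp t)]
  exact (hasSum_mgf_smul_genocchiMeasure hp hq hp1 hq1 hmom hpq hqp t).tsum_eq

end Representation

lemma symP_eq (hp : ∀ i, 0 < p i) (hq : ∀ i, 0 < q i) (hp1 : ∑' i, p i = 1)
    (hq1 : ∑' i, q i = 1) (hmom : ∀ s : ℝ, Summable (fun i => p i ^ s * q i ^ (1 - s))) (a : ℝ) :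
    symP p q a =
      relDiv p q a * relDiv p q (1 - a) - relDiv p q (1 / 2) * relDiv p q (1 / 2) := by
  rw [symP, relDiv_comm p q a, relDiv_half hp hq hp1 hq1 (hmom _)]
  ring

end Divergences

theorem theorem8_second {ι : Type*} [Countable ι] (p q : ι → ℝ)
    (hp : ∀ i, 0 < p i) (hq : ∀ i, 0 < q i)
    (hp1 : ∑' i, p i = 1) (hq1 : ∑' i, q i = 1)
    (hmom : ∀ s : ℝ, Summable (fun i => p i ^ s * q i ^ (1 - s)))
    (hpq : Summable (fun i => p i * Real.log (p i / q i)))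
    (hqp : Summable (fun i => q i * Real.log (q i / p i)))
    (a b : ℝ) :
    |symP p q a - symP p q b| ≤
      Real.sqrt (symP p q (a + b - 1 / 2) * symP p q (a - b + 1 / 2)) := by
  set M := mgf id (relDivMeasure p q)
  have hsymP : ∀ c, symP p q c = M (c - 1 / 2) * M (-(c - 1 / 2)) - M 0 * M (-0) := fun c => by
    simp only [M, mgf_relDivMeasure hp hq hp1 hq1 hmom hpq hqp, symP_eq hp hq hp1 hq1 hmom,
      sub_add_cancel, neg_zero, zero_add, show -(c - 1 / 2) + 1 / 2 = 1 - c by ring]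
  rw [hsymP a, hsymP b, hsymP (a + b - 1 / 2), hsymP (a - b + 1 / 2), sub_sub_sub_cancel_right,
    show a + b - 1 / 2 - 1 / 2 = (a - 1 / 2) + (b - 1 / 2) by ring,
    show a - b + 1 / 2 - 1 / 2 = (a - 1 / 2) - (b - 1 / 2) by ring]
  exact abs_le_sqrt (sq_mgf_mul_mgf_neg_sub_le (X := id)
    (integrable_exp_mul_relDivMeasure hp hq hp1 hq1 hmom hpq hqp) _ _)
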